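/- Let N ∈ ℕ, n ∈ {2,…,N}, and Z = (z_{j,k}) ∈ ℂ^{N×n}. With z̃_k, a_{j,k}, U_j(x), G_m(Z) as defined, one has G_2(Z) = −((N−2)!/N!) ∑_{K ⊆ {1,…,n}, |K|=2} (∑_{j=1}^N ∏_{k∈K} a_{j,k}) · ∏_{k ∈ {1,…,n}∖K} z̃_k, and if moreover n ≥ 3 and N ≥ 3, G_3(Z) = 2((N−3)!/N!) ∑_{K ⊆ {1,…,n}, |K|=3} (∑_{j=1}^N ∏_{k∈K} a_{j,k}) · ∏_{k ∈ {1,…,n}∖K} z̃_k. -/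

import Mathlib

open scoped BigOperators

/-- The permanent of a rectangular complex matrix `Z ∈ ℂ^{N×n}` (`n ≤ N`):
`per(Z) = ∑_{j ∈ [N]^n_≠} ∏_{k=1}^n z_{j_k,k}`, i.e. the sum over injective
maps `Fin n → Fin N`. -/
noncomputable def rectPermanent {N n : ℕ} (Z : Matrix (Fin N) (Fin n) ℂ) : ℂ :=
  ∑ j ∈ Finset.univ.filter (fun j : Fin n → Fin N => Function.Injective j),
    ∏ k : Fin n, Z (j k) k

/-- `z̃_k = (1/N) ∑_{j=1}^N z_{j,k}`, the `k`-th column mean. -/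
noncomputable def ztilde {N n : ℕ} (Z : Matrix (Fin N) (Fin n) ℂ) (k : Fin n) : ℂ :=
  (N : ℂ)⁻¹ * ∑ j : Fin N, Z j k

/-- `a_{j,k} = z_{j,k} − z̃_k`. -/
noncomputable def aEnt {N n : ℕ} (Z : Matrix (Fin N) (Fin n) ℂ) (j : Fin N) (k : Fin n) : ℂ :=
  Z j k - ztilde Z k

/-- `G_m(Z) = ((N−m)!/((n−m)!·N!)) · [x_1⋯x_n]((∏_j (1+U_j(x)))·(∑_k z̃_k x_k)^{n−m})`,
where `U_j(x) = ∑_k a_{j,k} x_k` and `[x_1⋯x_n]` denotes the coefficient of the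
monomial `x_1⋯x_n` (the `MvPolynomial` coefficient at exponent `∑ k, Finsupp.single k 1`). -/
noncomputable def GZ {N n : ℕ} (Z : Matrix (Fin N) (Fin n) ℂ) (m : ℕ) : ℂ :=
  ((N - m).factorial : ℂ) / (((n - m).factorial : ℂ) * (N.factorial : ℂ)) *
    MvPolynomial.coeff (∑ k : Fin n, Finsupp.single k 1)
      ((∏ j : Fin N,
          (1 + ∑ k : Fin n, MvPolynomial.C (aEnt Z j k) * MvPolynomial.X k)) *
        (∑ k : Fin n, MvPolynomial.C (ztilde Z k) * MvPolynomial.X k) ^ (n - m))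

/-- `H_ℓ(Z) = ∑_{m=0}^ℓ G_m(Z)`. -/
noncomputable def HZ {N n : ℕ} (Z : Matrix (Fin N) (Fin n) ℂ) (ℓ : ℕ) : ℂ :=
  ∑ m ∈ Finset.range (ℓ + 1), GZ Z m

/-- `C_ℓ = (e^ℓ · ℓ! / ℓ^{ℓ+1/2})^{1/2}`. -/
noncomputable def Cconst (ℓ : ℕ) : ℝ :=
  Real.sqrt (Real.exp ℓ * ℓ.factorial / (ℓ : ℝ) ^ ((ℓ : ℝ) + 1 / 2))

/-- `α = (1/(nN)) ∑_{j=1}^N ∑_{k=1}^n |a_{j,k}|²`. -/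
noncomputable def alphaZ {N n : ℕ} (Z : Matrix (Fin N) (Fin n) ℂ) : ℝ :=
  ((n : ℝ) * N)⁻¹ * ∑ j : Fin N, ∑ k : Fin n, ‖aEnt Z j k‖ ^ 2

/-- `β = (1/n) ∑_{k=1}^n |z̃_k|²`. -/
noncomputable def betaZ {N n : ℕ} (Z : Matrix (Fin N) (Fin n) ℂ) : ℝ :=
  (n : ℝ)⁻¹ * ∑ k : Fin n, ‖ztilde Z k‖ ^ 2

/-- `γ(d) = (nα/N)·min{dn, 1/(1−β)}`; for `β = 1` the quantity `1/(1−β)` is `+∞`,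
so the minimum is interpreted as `dn`. `γ = γ(1)`. -/
noncomputable def gammaZ {N n : ℕ} (Z : Matrix (Fin N) (Fin n) ℂ) (d : ℝ) : ℝ :=
  (n : ℝ) * alphaZ Z / N *
    (if betaZ Z < 1 then min (d * n) (1 / (1 - betaZ Z)) else d * n)

/-!
Write `P = ∏ⱼ (1 + Uⱼ)` and `L = ∑ₖ z̃ₖ xₖ`. Extracting `x₁⋯xₙ` from `P · L^(n-m)` splits the
variables into a set `K` of size `m`, read off from `P`, and its complement, read off from
`L^(n-m)` with coefficient `(n-m)! ∏_{k ∉ K} z̃ₖ`. Since the `Uⱼ` are linear forms, the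
`x^K`-coefficient of `P` is that of the elementary symmetric polynomial `e_m(U₁, …, U_N)`.
The columns of `a` are centred, so `∑ⱼ Uⱼ = 0`, and Newton's identities reduce to
`2 e₂ = -p₂` and `3 e₃ = p₃`; the `x^K`-coefficient of `p_m = ∑ⱼ Uⱼ^m` is
`m! ∑ⱼ ∏_{k ∈ K} a_{j,k}`.
-/

open Finset MvPolynomial

section SquarefreeMonomial

variable {σ R : Type*} [CommSemiring R]

noncomputable def sqfreeExp (T : Finset σ) : σ →₀ ℕ := ∑ k ∈ T, Finsupp.single k 1

theorem degree_sqfreeExp (T : Finset σ) : (sqfreeExp T).degree = T.card := by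
  simp [sqfreeExp, map_sum]

variable [DecidableEq σ]

theorem sqfreeExp_apply (T : Finset σ) (k : σ) :
    sqfreeExp T k = if k ∈ T then 1 else 0 := by
  simp [sqfreeExp, Finsupp.finsetSum_apply, Finsupp.single_apply]

theorem support_sqfreeExp (T : Finset σ) : (sqfreeExp T).support = T := by
  ext k
  simp [sqfreeExp_apply]

theorem coeff_sqfreeExp_mul (T : Finset σ) (p q : MvPolynomial σ R) :
    coeff (sqfreeExp T) (p * q) =
      ∑ S ∈ T.powerset, coeff (sqfreeExp S) p * coeff (sqfreeExp (T \ S)) q := by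
  rw [coeff_mul]
  symm
  refine sum_nbij' (fun S ↦ (sqfreeExp S, sqfreeExp (T \ S))) (fun e ↦ e.1.support)
    ?_ ?_ ?_ ?_ fun _ _ ↦ rfl
  · intro S hS
    rw [mem_powerset] at hS
    rw [HasAntidiagonal.mem_antidiagonal, sqfreeExp, sqfreeExp, sqfreeExp, add_comm,
      sum_sdiff hS]
  · intro e he
    rw [HasAntidiagonal.mem_antidiagonal] at he
    rw [mem_powerset, ← support_sqfreeExp T, ← he]
    exact Finsupp.support_mono le_self_add
  · intro S _
    simp [support_sqfreeExp]
  · rintro ⟨e₁, e₂⟩ he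
    rw [HasAntidiagonal.mem_antidiagonal] at he
    have hk := fun k ↦ congrArg (· k) he
    simp only [Finsupp.add_apply, sqfreeExp_apply] at hk
    ext k <;> grind [sqfreeExp_apply]

end SquarefreeMonomial

section LinearForm

variable {σ R : Type*} [Fintype σ] [CommSemiring R]

noncomputable def linForm (w : σ → R) : MvPolynomial σ R := ∑ k, C (w k) * X k

theorem isHomogeneous_linForm (w : σ → R) : (linForm w).IsHomogeneous 1 :=
  IsHomogeneous.sum _ _ _ fun k _ ↦ isHomogeneous_C_mul_X _ k

theorem coeff_sqfreeExp_linForm_pow (w : σ → R) (T : Finset σ) (r : ℕ) :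
    coeff (sqfreeExp T) (linForm w ^ r) =
      if T.card = r then r.factorial * ∏ k ∈ T, w k else 0 := by
  classical
  have hsum : (sqfreeExp T).sum (fun _ m ↦ m) = T.card := degree_sqfreeExp T
  have hmult : (sqfreeExp T).multinomial = T.card.factorial := by
    have spec := Nat.multinomial_spec T (sqfreeExp T)
    rw [prod_eq_one fun k hk ↦ by simp [sqfreeExp_apply, hk], one_mul] at spec
    rw [Finsupp.multinomial_eq, support_sqfreeExp, spec, ← degree_sqfreeExp,
      Finsupp.degree_apply, support_sqfreeExp]
  simp only [linForm, ← smul_eq_C_mul, coeff_linearCombination_X_pow_of_fintype, hsum, hmult]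
  split_ifs with h
  · rw [h, Finsupp.prod, support_sqfreeExp]
    congr 1
    exact prod_congr rfl fun k hk ↦ by simp [sqfreeExp_apply, hk]
  · rfl

theorem coeff_sqfreeExp_mul_linForm_pow [DecidableEq σ] (q : MvPolynomial σ R) (w : σ → R)
    {T : Finset σ} {m r : ℕ} (h : m + r = T.card) :
    coeff (sqfreeExp T) (q * linForm w ^ r) =
      ∑ S ∈ T.powersetCard m, coeff (sqfreeExp S) q * (r.factorial * ∏ k ∈ T \ S, w k) := by
  rw [coeff_sqfreeExp_mul, powersetCard_eq_filter, sum_filter]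
  refine sum_congr rfl fun S hS ↦ ?_
  have hST := mem_powerset.1 hS
  have := card_le_card hST
  rw [coeff_sqfreeExp_linForm_pow, card_sdiff_of_subset hST]
  split_ifs <;> first | rfl | omega | rw [mul_zero]

end LinearForm

section ProductOfLinearForms

variable {σ ι R : Type*} [CommSemiring R]

theorem coeff_prod_one_add_of_isHomogeneous {U : ι → MvPolynomial σ R}
    (hU : ∀ i, (U i).IsHomogeneous 1) (s : Finset ι) (d : σ →₀ ℕ) :
    coeff d (∏ i ∈ s, (1 + U i)) = ∑ t ∈ s.powersetCard d.degree, coeff d (∏ i ∈ t, U i) := by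
  classical
  rw [prod_one_add, coeff_sum, powersetCard_eq_filter, sum_filter]
  refine sum_congr rfl fun t _ ↦ ?_
  split_ifs with h
  · rfl
  · refine (IsHomogeneous.prod t U (fun _ ↦ 1) fun i _ ↦ hU i).coeff_eq_zero ?_
    simpa [eq_comm] using h

end ProductOfLinearForms

section Newton

variable {ι R : Type*} [Fintype ι] [CommRing R]

theorem eval_esymm (u : ι → R) (k : ℕ) :
    eval u (esymm ι R k) = ∑ t ∈ powersetCard k univ, ∏ i ∈ t, u i := by
  simp [esymm, map_sum, map_prod]

theorem two_mul_sum_powersetCard_two_prod {u : ι → R} (hu : ∑ i, u i = 0) :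
    2 * ∑ t ∈ powersetCard 2 univ, ∏ i ∈ t, u i = -∑ i, u i ^ 2 := by
  have newton := congrArg (eval u) (mul_esymm_eq_sum ι R 2)
  rw [show {a ∈ antidiagonal 2 | a.1 < 2} = {(0, 2), (1, 1)} by decide,
    sum_pair (by decide)] at newton
  simp [esymm_one, psum, hu, eval_esymm] at newton
  linear_combination newton

theorem three_mul_sum_powersetCard_three_prod {u : ι → R} (hu : ∑ i, u i = 0) :
    3 * ∑ t ∈ powersetCard 3 univ, ∏ i ∈ t, u i = ∑ i, u i ^ 3 := by
  have newton := congrArg (eval u) (mul_esymm_eq_sum ι R 3)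
  rw [show {a ∈ antidiagonal 3 | a.1 < 3} = {(0, 3), (1, 2), (2, 1)} by decide,
    sum_insert (by decide), sum_pair (by decide)] at newton
  simp [esymm_one, psum, hu, eval_esymm] at newton
  linear_combination newton

end Newton

section CenteredColumns

variable {σ ι R : Type*} [Fintype σ] [Fintype ι] [CommRing R] {a : ι → σ → R}

theorem sum_linForm_eq_zero (ha : ∀ k, ∑ i, a i k = 0) : ∑ i, linForm (a i) = 0 := by
  simp only [linForm]
  rw [sum_comm]
  simp [← sum_mul, ← map_sum, ha]

theorem coeff_sqfreeExp_sum_linForm_pow (a : ι → σ → R) {K : Finset σ} {r : ℕ} (hK : K.card = r) :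
    coeff (sqfreeExp K) (∑ i, linForm (a i) ^ r) = r.factorial * ∑ i, ∏ k ∈ K, a i k := by
  simp [coeff_sum, coeff_sqfreeExp_linForm_pow, hK, mul_sum]

variable [IsDomain R] [CharZero R]

theorem coeff_prod_one_add_linForm_of_card_eq_two (ha : ∀ k, ∑ i, a i k = 0) {K : Finset σ}
    (hK : K.card = 2) :
    coeff (sqfreeExp K) (∏ i, (1 + linForm (a i))) = -∑ i, ∏ k ∈ K, a i k := by
  rw [coeff_prod_one_add_of_isHomogeneous (fun i ↦ isHomogeneous_linForm (a i)),
    degree_sqfreeExp, hK, ← coeff_sum]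
  have newton := congrArg (coeff (sqfreeExp K))
    (two_mul_sum_powersetCard_two_prod (sum_linForm_eq_zero ha))
  rw [← map_ofNat C, coeff_C_mul, coeff_neg, coeff_sqfreeExp_sum_linForm_pow a hK] at newton
  refine mul_left_cancel₀ (two_ne_zero (α := R)) ?_
  simpa using newton

theorem coeff_prod_one_add_linForm_of_card_eq_three (ha : ∀ k, ∑ i, a i k = 0) {K : Finset σ}
    (hK : K.card = 3) :
    coeff (sqfreeExp K) (∏ i, (1 + linForm (a i))) = 2 * ∑ i, ∏ k ∈ K, a i k := by
  rw [coeff_prod_one_add_of_isHomogeneous (fun i ↦ isHomogeneous_linForm (a i)),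
    degree_sqfreeExp, hK, ← coeff_sum]
  have newton := congrArg (coeff (sqfreeExp K))
    (three_mul_sum_powersetCard_three_prod (sum_linForm_eq_zero ha))
  rw [← map_ofNat C, coeff_C_mul, coeff_sqfreeExp_sum_linForm_pow a hK] at newton
  refine mul_left_cancel₀ (by norm_num : (3 : R) ≠ 0) ?_
  linear_combination newton

end CenteredColumns

section ColumnMeans

variable {N n : ℕ} (Z : Matrix (Fin N) (Fin n) ℂ)

theorem sum_aEnt_eq_zero (k : Fin n) : ∑ j, aEnt Z j k = 0 := by
  rcases eq_or_ne N 0 with rfl | hN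
  · simp
  · simp [aEnt, ztilde, sum_sub_distrib, hN]

theorem GZ_eq_sum_powersetCard {m : ℕ} (hm : m ≤ n) :
    GZ Z m = ((N - m).factorial / N.factorial : ℂ) *
      ∑ K ∈ powersetCard m univ,
        coeff (sqfreeExp K) (∏ j, (1 + linForm (aEnt Z j))) * ∏ k ∈ Kᶜ, ztilde Z k := by
  change _ * coeff (sqfreeExp univ) ((∏ j, (1 + linForm (aEnt Z j))) *
    linForm (ztilde Z) ^ (n - m)) = _
  rw [coeff_sqfreeExp_mul_linForm_pow (m := m) _ _ (by simp; omega), mul_sum, mul_sum]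
  refine sum_congr rfl fun K _ ↦ ?_
  rw [compl_eq_univ_sdiff]
  have : ((n - m).factorial : ℂ) ≠ 0 := Nat.cast_ne_zero.2 (Nat.factorial_ne_zero _)
  field_simp

end ColumnMeans

theorem stmt16_general (N n : ℕ) (hn2 : 2 ≤ n)
    (Z : Matrix (Fin N) (Fin n) ℂ) :
    GZ Z 2 = -(((N - 2).factorial : ℂ) / (N.factorial : ℂ)) *
        ∑ K ∈ Finset.powersetCard 2 (Finset.univ : Finset (Fin n)),
          (∑ j : Fin N, ∏ k ∈ K, aEnt Z j k) * ∏ k ∈ Kᶜ, ztilde Z k ∧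
      (3 ≤ n → 3 ≤ N →
        GZ Z 3 = 2 * (((N - 3).factorial : ℂ) / (N.factorial : ℂ)) *
          ∑ K ∈ Finset.powersetCard 3 (Finset.univ : Finset (Fin n)),
            (∑ j : Fin N, ∏ k ∈ K, aEnt Z j k) * ∏ k ∈ Kᶜ, ztilde Z k) := by
  refine ⟨?_, fun hn3 _ ↦ ?_⟩
  · rw [GZ_eq_sum_powersetCard Z hn2, sum_congr rfl fun K hK ↦ by
      rw [coeff_prod_one_add_linForm_of_card_eq_two (sum_aEnt_eq_zero Z)
        (mem_powersetCard_univ.1 hK)]]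
    simp only [neg_mul, sum_neg_distrib, mul_neg]
  · rw [GZ_eq_sum_powersetCard Z hn3, sum_congr rfl fun K hK ↦ by
      rw [coeff_prod_one_add_linForm_of_card_eq_three (sum_aEnt_eq_zero Z)
        (mem_powersetCard_univ.1 hK)]]
    simp only [mul_assoc, ← mul_sum]
    ring

/-- `G_2(Z) = −((N−2)!/N!) ∑_{|K|=2} (∑_j ∏_{k∈K} a_{j,k}) ∏_{k∉K} z̃_k`, and if `n ≥ 3`
(and hence `N ≥ 3`) also
`G_3(Z) = 2((N−3)!/N!) ∑_{|K|=3} (∑_j ∏_{k∈K} a_{j,k}) ∏_{k∉K} z̃_k`. -/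
theorem stmt16 (N n : ℕ) (hn2 : 2 ≤ n) (hnN : n ≤ N)
    (Z : Matrix (Fin N) (Fin n) ℂ) :
    GZ Z 2 = -(((N - 2).factorial : ℂ) / (N.factorial : ℂ)) *
        ∑ K ∈ Finset.powersetCard 2 (Finset.univ : Finset (Fin n)),
          (∑ j : Fin N, ∏ k ∈ K, aEnt Z j k) * ∏ k ∈ Kᶜ, ztilde Z k ∧
      (3 ≤ n → 3 ≤ N →
        GZ Z 3 = 2 * (((N - 3).factorial : ℂ) / (N.factorial : ℂ)) *
          ∑ K ∈ Finset.powersetCard 3 (Finset.univ : Finset (Fin n)),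
            (∑ j : Fin N, ∏ k ∈ K, aEnt Z j k) * ∏ k ∈ Kᶜ, ztilde Z k) :=
  stmt16_general N n hn2 Z
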